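/- Let r and s be odd integers with 3 ≤ s < r, and set n = r + s − 2 (so n is even). Then the element ∑_{q=0}^{(s−3)/2} [q, s−2−q, r]^0 − [0, s−1, r−1]^0 of Θ_n lies in the image of the map d : Θ_n → Θ_n; consequently ∑_{q=0}^{(s−3)/2} [q, s−2−q, r]^0 and [0, s−1, r−1]^0 represent the same class in the quotient Θ_n / d(Θ_n). -/

import Mathlib

/-- Validity condition for a theta-graph basis symbol `[a,b,c]^l`:
`0 ≤ a < b < c`, `l ∈ {0,1,2}`, with the parity conventions that `l = 0`
requires `a + b + c` even and `l = 2` requires `a + b + c` odd. -/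
def validSym (a b c l : ℤ) : Prop :=
  0 ≤ a ∧ a < b ∧ b < c ∧ (l = 0 ∨ l = 1 ∨ l = 2) ∧
    (l = 0 → Even (a + b + c)) ∧ (l = 2 → Odd (a + b + c))

/-- The indexing set of valid theta symbols. -/
def SymIdx : Type := {p : ℤ × ℤ × ℤ × ℤ // validSym p.1 p.2.1 p.2.2.1 p.2.2.2}

/-- The theta space `Θ`: the free `ℚ`-vector space on the valid symbols. -/
abbrev Theta : Type := SymIdx →₀ ℚ

/-- The symbol `[a,b,c]^l ∈ Θ`, extended by `0` when the validity
conditions fail. -/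
noncomputable def sym (a b c l : ℤ) : Theta := by
  classical
  exact if h : validSym a b c l then Finsupp.single ⟨(a, b, c, l), h⟩ 1 else 0

/-- Value of the differential on a basis symbol. -/
noncomputable def dAux (p : SymIdx) : Theta := by
  classical
  exact
    if p.1.2.2.2 = 1 then
      sym (p.1.1 + 1) p.1.2.1 p.1.2.2.1 0 - sym p.1.1 (p.1.2.1 + 1) p.1.2.2.1 0
        + sym p.1.1 p.1.2.1 (p.1.2.2.1 + 1) 0
    else if p.1.2.2.2 = 2 then
      (2 : ℚ) • (sym (p.1.1 + 1) p.1.2.1 p.1.2.2.1 1 - sym p.1.1 (p.1.2.1 + 1) p.1.2.2.1 1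
        + sym p.1.1 p.1.2.1 (p.1.2.2.1 + 1) 1)
    else 0

/-- The `ℚ`-linear differential `d : Θ → Θ`, given on basis symbols by
`d [a,b,c]^0 = 0`, `d [a,b,c]^1 = [a+1,b,c]^0 - [a,b+1,c]^0 + [a,b,c+1]^0`,
`d [a,b,c]^2 = 2([a+1,b,c]^1 - [a,b+1,c]^1 + [a,b,c+1]^1)`. -/
noncomputable def dTheta : Theta →ₗ[ℚ] Theta :=
  Finsupp.lsum ℚ fun p => LinearMap.toSpanSingleton ℚ Theta (dAux p)

/-- The weight-`n` part `Θ_n`: the span of the symbols `[a,b,c]^l` with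
`a + b + c + l = n`. -/
noncomputable def ThetaN (n : ℤ) : Submodule ℚ Theta :=
  Submodule.span ℚ {x | ∃ a b c l : ℤ, a + b + c + l = n ∧ x = sym a b c l}

/-!
The difference is `d` of `∑_{q=0}^{(s-3)/2} [q, s-2-q, r-1]^1`. Applying `d` termwise, the
contributions `[q+1, s-2-q, r-1]^0 - [q, s-1-q, r-1]^0` telescope in `q`; the top end term is
`[(s-1)/2, (s-1)/2, r-1]^0 = 0`, so only `-[0, s-1, r-1]^0` survives next to the
terms `[q, s-2-q, r]^0`.
-/

lemma sym_eq_zero_of_not_validSym {a b c l : ℤ} (h : ¬ validSym a b c l) : sym a b c l = 0 :=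
  dif_neg h

lemma dTheta_sym_one {a b c : ℤ} (h : validSym a b c 1) :
    dTheta (sym a b c 1) = sym (a + 1) b c 0 - sym a (b + 1) c 0 + sym a b (c + 1) 0 := by
  rw [sym, dif_pos h]
  erw [dTheta, Finsupp.lsum_single]
  simp [dAux]

lemma sym_mem_ThetaN {n a b c l : ℤ} (h : a + b + c + l = n) : sym a b c l ∈ ThetaN n :=
  Submodule.subset_span ⟨a, b, c, l, h, rfl⟩

lemma dTheta_sum_sym_one (N : ℕ) {b c : ℤ} (hb : b = 2 * N + 1) (hbc : b < c) :
    dTheta (∑ q ∈ Finset.range (N + 1), sym q (b - q) c 1) =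
      (∑ q ∈ Finset.range (N + 1), sym q (b - q) (c + 1) 0) - sym 0 (b + 1) c 0 := by
  set g : ℕ → Theta := fun q => sym q (b + 1 - q) c 0
  have hstep : ∀ q ∈ Finset.range (N + 1),
      dTheta (sym q (b - q) c 1) = (g (q + 1) - g q) + sym q (b - q) (c + 1) 0 := by
    intro q hq
    rw [Finset.mem_range] at hq
    rw [dTheta_sym_one ⟨by positivity, by omega, by omega, by omega, by omega, by omega⟩]
    simp only [g]
    push_cast
    ring_nf
  have htop : g (N + 1) = 0 :=
    sym_eq_zero_of_not_validSym fun ⟨_, hlt, _⟩ => by push_cast at hlt; omega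
  rw [map_sum, Finset.sum_congr rfl hstep, Finset.sum_add_distrib, Finset.sum_range_sub g,
    htop]
  simp only [g, Nat.cast_zero, sub_zero]
  abel

theorem same_class_general (r s : ℤ) (hs : Odd s) (h3 : 3 ≤ s) (hsr : s < r) :
    ((∑ q ∈ Finset.range (((s - 3) / 2).toNat + 1),
        sym (q : ℤ) (s - 2 - (q : ℤ)) r 0) - sym 0 (s - 1) (r - 1) 0
      ∈ Submodule.map dTheta (ThetaN (r + s - 2))) ∧
    ∀ (h1 : (∑ q ∈ Finset.range (((s - 3) / 2).toNat + 1),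
              sym (q : ℤ) (s - 2 - (q : ℤ)) r 0) ∈ ThetaN (r + s - 2))
      (h2 : sym 0 (s - 1) (r - 1) 0 ∈ ThetaN (r + s - 2)),
      (Submodule.Quotient.mk
          ⟨∑ q ∈ Finset.range (((s - 3) / 2).toNat + 1),
              sym (q : ℤ) (s - 2 - (q : ℤ)) r 0, h1⟩ :
        ↥(ThetaN (r + s - 2)) ⧸
          (Submodule.map dTheta (ThetaN (r + s - 2))).comap (ThetaN (r + s - 2)).subtype)
        = Submodule.Quotient.mk ⟨sym 0 (s - 1) (r - 1) 0, h2⟩ := by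
  set N := ((s - 3) / 2).toNat
  have hN : s - 2 = 2 * N + 1 := by obtain ⟨k, rfl⟩ := hs; omega
  have hdiff := dTheta_sum_sym_one N hN (by omega : s - 2 < r - 1)
  rw [sub_add_cancel, show s - 2 + 1 = s - 1 by ring] at hdiff
  have hmem : (∑ q ∈ Finset.range (N + 1), sym q (s - 2 - q) r 0) - sym 0 (s - 1) (r - 1) 0
      ∈ Submodule.map dTheta (ThetaN (r + s - 2)) :=
    ⟨_, Submodule.sum_mem _ fun q _ => sym_mem_ThetaN (by ring), hdiff⟩
  refine ⟨hmem, fun h1 h2 => ?_⟩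
  rw [Submodule.Quotient.eq, Submodule.mem_comap]
  exact hmem

/-- For odd `r > s ≥ 3` and `n = r + s - 2`, the element
`∑_{q=0}^{(s-3)/2} [q, s-2-q, r]^0 - [0, s-1, r-1]^0` of `Θ_n` lies in the
image of `d : Θ_n → Θ_n`; consequently the two terms represent the same class
in `Θ_n / d(Θ_n)`. -/
theorem same_class (r s : ℤ) (hr : Odd r) (hs : Odd s) (h3 : 3 ≤ s) (hsr : s < r) :
    ((∑ q ∈ Finset.range (((s - 3) / 2).toNat + 1),
        sym (q : ℤ) (s - 2 - (q : ℤ)) r 0) - sym 0 (s - 1) (r - 1) 0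
      ∈ Submodule.map dTheta (ThetaN (r + s - 2))) ∧
    ∀ (h1 : (∑ q ∈ Finset.range (((s - 3) / 2).toNat + 1),
              sym (q : ℤ) (s - 2 - (q : ℤ)) r 0) ∈ ThetaN (r + s - 2))
      (h2 : sym 0 (s - 1) (r - 1) 0 ∈ ThetaN (r + s - 2)),
      (Submodule.Quotient.mk
          ⟨∑ q ∈ Finset.range (((s - 3) / 2).toNat + 1),
              sym (q : ℤ) (s - 2 - (q : ℤ)) r 0, h1⟩ :
        ↥(ThetaN (r + s - 2)) ⧸
          (Submodule.map dTheta (ThetaN (r + s - 2))).comap (ThetaN (r + s - 2)).subtype)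
        = Submodule.Quotient.mk ⟨sym 0 (s - 1) (r - 1) 0, h2⟩ :=
  same_class_general r s hs h3 hsr
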